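/- Let φ : A* → A* be a morphism, ℓ ≥ 1, and a ∈ A an unbounded letter with φ^ℓ(a) = a·w, w non-empty. Suppose k is such that φ^{ℓk}(a) contains at least two occurrences of the letter a, let v be the longest prefix of φ^{ℓk}(a) containing exactly one occurrence of a, and suppose φ^ℓ(v) = v^m for some m ≥ 2. Then the infinite fixed point (φ^ℓ)^ω(a) equals v^ω, i.e., it is purely periodic. -/

import Mathlib

def wpow {A : Type*} (w : List A) (k : ℕ) : List A := (List.replicate k w).flatten

def WordHom {A : Type*} (φ : List A → List A) : Prop :=
  ∀ x y : List A, φ (x ++ y) = φ x ++ φ y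

def BoundedLetter {A : Type*} (φ : List A → List A) (a : A) : Prop :=
  (Set.range fun j : ℕ => φ^[j] [a]).Finite

def perW {A : Type*} [Inhabited A] (z : List A) (i : ℕ) : A :=
  z.getD (i % z.length) default

/-!
Put `ψ = φ^ℓ`. Since `ψ(a) = a·w`, the words `ψⁿ(a)` form a prefix chain, and `v` is a prefix of
`ψᵏ(a)`, so `ψⁱ(v) = v^(mⁱ)` is a prefix of `ψ^(i+k)(a)` and hence of every later `ψⁿ(a)`.
As `m ≥ 2` and `v ≠ []`, this prefix is longer than `i`, so position `i` of `ψⁿ(a)` is that of `v^ω`.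
-/

section Wpow

variable {A : Type*}

lemma wpow_succ (v : List A) (k : ℕ) : wpow v (k + 1) = v ++ wpow v k := by
  simp [wpow, List.replicate_succ]

lemma wpow_add (v : List A) (p q : ℕ) : wpow v (p + q) = wpow v p ++ wpow v q := by
  simp only [wpow, List.replicate_add, List.flatten_append]

lemma wpow_one (v : List A) : wpow v 1 = v := by simp [wpow]

lemma length_wpow (v : List A) (k : ℕ) : (wpow v k).length = k * v.length := by
  simp [wpow]

lemma wpow_wpow (v : List A) (p q : ℕ) : wpow (wpow v p) q = wpow v (q * p) := by
  induction q with
  | zero => simp [wpow]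
  | succ q ih => rw [wpow_succ, ih, Nat.succ_mul, Nat.add_comm, wpow_add]

lemma getD_wpow [Inhabited A] (v : List A) {K i : ℕ} (hi : i < K * v.length) :
    (wpow v K).getD i default = perW v i := by
  induction K generalizing i with
  | zero => omega
  | succ K ih =>
    rw [wpow_succ]
    by_cases h : i < v.length
    · rw [List.getD_append _ _ _ _ h, perW, Nat.mod_eq_of_lt h]
    · rw [List.getD_append_right _ _ _ _ (by omega), ih (by rw [Nat.succ_mul] at hi; omega),
        perW, perW, ← Nat.mod_eq_sub_mod (by omega)]

lemma getD_eq_perW_of_wpow_prefix [Inhabited A] {v z : List A} {K i : ℕ}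
    (hz : wpow v K <+: z) (hi : i < K * v.length) :
    i < z.length ∧ z.getD i default = perW v i := by
  rw [← length_wpow] at hi
  obtain ⟨t, rfl⟩ := hz
  refine ⟨by simp only [List.length_append]; omega, ?_⟩
  rw [List.getD_append _ _ _ _ hi, getD_wpow]
  rwa [← length_wpow]

end Wpow

namespace WordHom

variable {A : Type*} {φ : List A → List A}

lemma map_nil (hφ : WordHom φ) : φ [] = [] := by
  simpa using congrArg List.length (hφ [] [])

lemma iterate (hφ : WordHom φ) (n : ℕ) : WordHom φ^[n] := by
  induction n with
  | zero => intro x y; rfl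
  | succ n ih =>
    intro x y
    rw [Function.iterate_succ_apply', Function.iterate_succ_apply',
      Function.iterate_succ_apply', ih x y, hφ]

lemma map_wpow (hφ : WordHom φ) (v : List A) (K : ℕ) : φ (wpow v K) = wpow (φ v) K := by
  induction K with
  | zero => simpa [wpow] using hφ.map_nil
  | succ K ih => rw [wpow_succ, hφ, ih, wpow_succ]

lemma map_prefix (hφ : WordHom φ) {x y : List A} (h : x <+: y) : φ x <+: φ y := by
  obtain ⟨t, rfl⟩ := h
  exact ⟨φ t, (hφ x t).symm⟩

lemma iterate_eq_wpow_pow (hφ : WordHom φ) {v : List A} {m : ℕ} (hv : φ v = wpow v m)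
    (n : ℕ) : φ^[n] v = wpow v (m ^ n) := by
  induction n with
  | zero => simp [wpow_one]
  | succ n ih => rw [Function.iterate_succ_apply', ih, hφ.map_wpow, hv, wpow_wpow, pow_succ]

lemma iterate_prefix_iterate (hφ : WordHom φ) {a : A} {w : List A} (ha : φ [a] = a :: w)
    {n n' : ℕ} (h : n ≤ n') : φ^[n] [a] <+: φ^[n'] [a] := by
  induction n', h using Nat.le_induction with
  | base => exact List.prefix_refl _
  | succ n' _ ih =>
    refine ih.trans ⟨φ^[n'] w, ?_⟩
    rw [Function.iterate_succ_apply, ha]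
    exact (hφ.iterate n' [a] w).symm

end WordHom

theorem stmt_18_general {A : Type*} [Inhabited A] [DecidableEq A]
    (φ : List A → List A) (hφ : WordHom φ)
    (ℓ : ℕ) (a : A)
    (w : List A) (hfix : φ^[ℓ] [a] = a :: w)
    (k : ℕ)
    (v : List A)
    (hvpref : v <+: φ^[ℓ * k] [a]) (hvone : v.count a = 1)
    (m : ℕ) (hm : 2 ≤ m) (hv : φ^[ℓ] v = wpow v m) :
    -- the fixed point `(φ^ℓ)^ω(a) = lim_n φ^{ℓn}(a)` equals `v^ω`
    ∀ i : ℕ, ∃ N : ℕ, ∀ n ≥ N, i < (φ^[ℓ * n] [a]).length ∧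
        (φ^[ℓ * n] [a]).getD i default = perW v i := by
  intro i
  simp only [Function.iterate_mul] at hvpref ⊢
  set ψ := φ^[ℓ]
  have hψ : WordHom ψ := hφ.iterate ℓ
  refine ⟨i + k, fun n hn => getD_eq_perW_of_wpow_prefix (K := m ^ i) ?_ ?_⟩
  · calc wpow v (m ^ i) = ψ^[i] v := (hψ.iterate_eq_wpow_pow hv i).symm
      _ <+: ψ^[i] (ψ^[k] [a]) := (hψ.iterate i).map_prefix hvpref
      _ = ψ^[i + k] [a] := (Function.iterate_add_apply _ _ _ _).symm
      _ <+: ψ^[n] [a] := hψ.iterate_prefix_iterate hfix hn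
  · have hv_pos : 0 < v.length := List.length_pos_iff.mpr (by rintro rfl; simp at hvone)
    calc i < 2 ^ i := Nat.lt_two_pow_self
      _ ≤ m ^ i := Nat.pow_le_pow_left hm i
      _ ≤ m ^ i * v.length := Nat.le_mul_of_pos_right _ hv_pos

theorem stmt_18 {A : Type*} [Inhabited A] [DecidableEq A]
    (φ : List A → List A) (hφ : WordHom φ)
    (ℓ : ℕ) (hℓ : 1 ≤ ℓ) (a : A) (ha : ¬ BoundedLetter φ a)
    (w : List A) (hw : w ≠ []) (hfix : φ^[ℓ] [a] = a :: w)
    (k : ℕ) (hk : 2 ≤ (φ^[ℓ * k] [a]).count a)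
    (v : List A)
    (hvpref : v <+: φ^[ℓ * k] [a]) (hvone : v.count a = 1)
    (hvlong : ∀ v' : List A, v' <+: φ^[ℓ * k] [a] → v'.count a = 1 →
        v'.length ≤ v.length)
    (m : ℕ) (hm : 2 ≤ m) (hv : φ^[ℓ] v = wpow v m) :
    -- the fixed point `(φ^ℓ)^ω(a) = lim_n φ^{ℓn}(a)` equals `v^ω`
    ∀ i : ℕ, ∃ N : ℕ, ∀ n ≥ N, i < (φ^[ℓ * n] [a]).length ∧
        (φ^[ℓ * n] [a]).getD i default = perW v i :=
  stmt_18_general φ hφ ℓ a w hfix k v hvpref hvone m hm hv
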